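/- For every real a < -1, the matrix R = [[1, a],[1, 1]] admits a continuous driving function f with f(0) ≥ 0 for which the Skorokhod problem has two distinct solutions. -/

import Mathlib

/-!
Write `a = -l` with `l > 1`. Two phases `E, O` on `[1, l]` generate the function equal to
`l ^ n • E (t / l ^ n)` on `[l ^ n, l ^ (n + 1))` for even `n` and to `l ^ n • O (t / l ^ n)`
for odd `n`. It is bounded by a multiple of `t`, hence continuous at `0`, and replacing `t` by
`l * t` multiplies it by `l` and swaps the phases. The Skorokhod problem is invariant under
`(f, g, m) ↦ (f (c * ·), g (c * ·), m (c * ·)) / c`. Explicit piecewise linear phases give a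
solution `(g, m)` for a driving function `f` whose two phases coincide, while those of `g` differ.
Rescaling by `l` fixes `f` and swaps the phases of `(g, m)`, so it produces a second solution.
-/

open Set Matrix

/-- The Skorokhod problem on `[0,∞)` in the nonnegative quadrant of `ℝ²` with
reflection matrix `R` and driving function `f`: `(g, m)` is a solution. -/
def IsSkorokhod (R : Matrix (Fin 2) (Fin 2) ℝ) (f g m : ℝ → Fin 2 → ℝ) : Prop :=
  ContinuousOn g (Set.Ici 0) ∧ ContinuousOn m (Set.Ici 0) ∧
  (∀ t ∈ Set.Ici (0:ℝ), ∀ j, 0 ≤ g t j) ∧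
  m 0 = 0 ∧
  (∀ j, MonotoneOn (fun t => m t j) (Set.Ici 0)) ∧
  (∀ t ∈ Set.Ici (0:ℝ), g t = f t + R.mulVec (m t)) ∧
  (∀ j, ∀ s t, 0 ≤ s → s ≤ t → (∀ r ∈ Set.Icc s t, 0 < g r j) → m s j = m t j)

/-- Uniqueness of solutions of the Skorokhod problem with matrix `R`, for every
continuous driving function `f` with `f 0 ≥ 0`. -/
def SkorokhodUnique (R : Matrix (Fin 2) (Fin 2) ℝ) : Prop :=
  ∀ f : ℝ → Fin 2 → ℝ, ContinuousOn f (Set.Ici 0) → (∀ j, 0 ≤ f 0 j) →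
    ∀ g m g' m', IsSkorokhod R f g m → IsSkorokhod R f g' m' →
      ∀ t ∈ Set.Ici (0:ℝ), g t = g' t ∧ m t = m' t

theorem IsSkorokhod.comp_mul {R : Matrix (Fin 2) (Fin 2) ℝ} {f g m : ℝ → Fin 2 → ℝ}
    (h : IsSkorokhod R f g m) {c : ℝ} (hc : 0 < c) :
    IsSkorokhod R (fun t => c⁻¹ • f (c * t)) (fun t => c⁻¹ • g (c * t))
      (fun t => c⁻¹ • m (c * t)) := by
  obtain ⟨hg, hm, hg₀, hm₀, hmono, heq, hcompl⟩ := h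
  have hmaps : MapsTo (c * ·) (Ici 0) (Ici 0) := fun t ht => mul_nonneg hc.le ht
  have hscale : ContinuousOn (c * ·) (Ici 0) := (continuous_const_mul c).continuousOn
  refine ⟨(hg.comp hscale hmaps).const_smul c⁻¹, (hm.comp hscale hmaps).const_smul c⁻¹,
    fun t ht j => mul_nonneg (inv_nonneg.2 hc.le) (hg₀ _ (hmaps ht) j), by simp [hm₀],
    fun j s hs t ht hst => ?_, fun t ht => ?_, fun j s t hs hst hpos => ?_⟩
  · exact mul_le_mul_of_nonneg_left (hmono j (hmaps hs) (hmaps ht)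
      (mul_le_mul_of_nonneg_left hst hc.le)) (inv_nonneg.2 hc.le)
  · simp only [heq _ (hmaps ht), smul_add, mulVec_smul]
  · have hpos' : ∀ r ∈ Icc (c * s) (c * t), 0 < g r j := fun r hr => by
      have hr' : c⁻¹ * r ∈ Icc s t :=
        ⟨(le_inv_mul_iff₀ hc).2 hr.1, (inv_mul_le_iff₀ hc).2 hr.2⟩
      simpa [hc.ne', hc] using hpos _ hr'
    simp [hcompl j _ _ (mul_nonneg hc.le hs) (mul_le_mul_of_nonneg_left hst hc.le) hpos']

open Filter Topology

namespace SkorokhodCounterexample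

noncomputable section

def cell (l t : ℝ) : ℤ := ⌊Real.logb l t⌋

variable {l t : ℝ} {n : ℤ}

theorem cell_eq_iff (hl : 1 < l) (ht : 0 < t) :
    cell l t = n ↔ t ∈ Ico (l ^ n) (l ^ (n + 1)) := by
  rw [cell, Int.floor_eq_iff, ← Real.rpow_intCast, ← Real.rpow_intCast,
    Real.le_logb_iff_rpow_le hl ht, Real.logb_lt_iff_lt_rpow hl ht]
  push_cast
  rfl

theorem mem_Ico_cell (hl : 1 < l) (ht : 0 < t) :
    t ∈ Ico (l ^ cell l t) (l ^ (cell l t + 1)) :=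
  (cell_eq_iff hl ht).1 rfl

theorem div_zpow_mem_Icc (hl : 1 < l) (ht : t ∈ Icc (l ^ n) (l ^ (n + 1))) :
    t / l ^ n ∈ Icc 1 l := by
  have hpos : 0 < l ^ n := zpow_pos (by linarith) n
  rw [zpow_add_one₀ (by linarith)] at ht
  constructor
  · rw [le_div_iff₀ hpos, one_mul]; exact ht.1
  · rw [div_le_iff₀ hpos, mul_comm]; exact ht.2

def phase {α : Type*} (n : ℤ) (E O : α) : α := if Even n then E else O

theorem phase_add_one {α : Type*} (E O : α) : phase (n + 1) E O = phase n O E := by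
  by_cases h : Even n <;> simp [phase, h]

@[elab_as_elim]
theorem phase_induction {α : Type*} {P : α → Prop} {E O : α} (hE : P E) (hO : P O) (n : ℤ) :
    P (phase n E O) := by
  unfold phase; split_ifs <;> assumption

section Module

variable {V : Type*} [AddCommGroup V] [Module ℝ V] {E O : ℝ → V}

def selfSimilar (l : ℝ) (E O : ℝ → V) (t : ℝ) : V :=
  if 0 < t then l ^ cell l t • phase (cell l t) E O (t / l ^ cell l t) else 0

def PhasesMatch (l : ℝ) (E O : ℝ → V) : Prop := E l = l • O 1 ∧ O l = l • E 1

theorem PhasesMatch.phase_eq (h : PhasesMatch l E O) (n : ℤ) :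
    phase n E O l = l • phase n O E 1 := by
  unfold phase; split_ifs; exacts [h.1, h.2]

theorem PhasesMatch.apply {ι : Type*} {E O : ℝ → ι → ℝ} (h : PhasesMatch l E O) (j : ι) :
    PhasesMatch l (fun s => E s j) (fun s => O s j) :=
  ⟨congrFun h.1 j, congrFun h.2 j⟩

theorem selfSimilar_of_nonpos (ht : t ≤ 0) : selfSimilar l E O t = 0 :=
  if_neg ht.not_gt

theorem selfSimilar_of_mem_Ico (hl : 1 < l) (ht : t ∈ Ico (l ^ n) (l ^ (n + 1))) :
    selfSimilar l E O t = l ^ n • phase n E O (t / l ^ n) := by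
  have ht0 : 0 < t := (zpow_pos (by linarith) n).trans_le ht.1
  rw [selfSimilar, if_pos ht0, (cell_eq_iff hl ht0).2 ht]

theorem selfSimilar_of_mem_Icc (hl : 1 < l) (h : PhasesMatch l E O)
    (ht : t ∈ Icc (l ^ n) (l ^ (n + 1))) :
    selfSimilar l E O t = l ^ n • phase n E O (t / l ^ n) := by
  rcases ht.2.lt_or_eq with ht' | rfl
  · exact selfSimilar_of_mem_Ico hl ⟨ht.1, ht'⟩
  have hl0 : l ≠ 0 := by positivity
  rw [selfSimilar_of_mem_Ico hl ⟨le_rfl, zpow_lt_zpow_right₀ hl (lt_add_one _)⟩, div_self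
    (zpow_ne_zero _ hl0), phase_add_one, zpow_add_one₀ hl0, mul_div_cancel_left₀ _
    (zpow_ne_zero _ hl0), h.phase_eq, smul_smul]

theorem selfSimilar_one (hl : 1 < l) : selfSimilar l E O 1 = E 1 := by
  rw [selfSimilar_of_mem_Ico (n := 0) hl (by simp [hl])]
  simp [phase]

theorem selfSimilar_mul_left (hl : 1 < l) (t : ℝ) :
    selfSimilar l E O (l * t) = l • selfSimilar l O E t := by
  have hl0 : 0 < l := by linarith
  rcases le_or_gt t 0 with ht | ht
  · rw [selfSimilar_of_nonpos ht, smul_zero,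
      selfSimilar_of_nonpos (mul_nonpos_of_nonneg_of_nonpos hl0.le ht)]
  obtain ⟨h1, h2⟩ := mem_Ico_cell hl ht
  have hlt : l * t ∈ Ico (l ^ (cell l t + 1)) (l ^ (cell l t + 1 + 1)) := by
    simp only [zpow_add_one₀ hl0.ne', mem_Ico] at h2 ⊢
    constructor <;> nlinarith
  rw [selfSimilar_of_mem_Ico hl hlt, selfSimilar_of_mem_Ico hl (mem_Ico_cell hl ht),
    phase_add_one, zpow_add_one₀ hl0.ne', smul_smul, mul_comm _ l, mul_div_mul_left _ _ hl0.ne']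

theorem selfSimilar_add_map {W : Type*} [AddCommGroup W] [Module ℝ W] (L : W →ₗ[ℝ] V)
    {E₁ O₁ : ℝ → V} {E₂ O₂ : ℝ → W} (hE : ∀ s, E s = E₁ s + L (E₂ s))
    (hO : ∀ s, O s = O₁ s + L (O₂ s)) (t : ℝ) :
    selfSimilar l E O t = selfSimilar l E₁ O₁ t + L (selfSimilar l E₂ O₂ t) := by
  unfold selfSimilar phase
  split_ifs <;> simp [hE, hO]

theorem selfSimilar_apply {ι : Type*} (E O : ℝ → ι → ℝ) (t : ℝ) (j : ι) :
    selfSimilar l E O t j = selfSimilar l (fun s => E s j) (fun s => O s j) t := by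
  unfold selfSimilar phase
  split_ifs <;> rfl

end Module

section Normed

variable {V : Type*} [NormedAddCommGroup V] [NormedSpace ℝ V] {E O : ℝ → V}

theorem continuousOn_selfSimilar_Icc (hl : 1 < l) (h : PhasesMatch l E O)
    (hE : ContinuousOn E (Icc 1 l)) (hO : ContinuousOn O (Icc 1 l)) (n : ℤ) :
    ContinuousOn (selfSimilar l E O) (Icc (l ^ n) (l ^ (n + 1))) := by
  refine ContinuousOn.congr (f := fun t => l ^ n • phase n E O (t / l ^ n)) ?_
    fun t ht => selfSimilar_of_mem_Icc hl h ht
  have hphase : ContinuousOn (phase n E O) (Icc 1 l) := phase_induction hE hO n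
  exact (hphase.comp (continuousOn_id.div_const _) fun _ ht => div_zpow_mem_Icc hl ht).const_smul _

theorem norm_selfSimilar_le (hl : 1 < l) {C : ℝ} (hE : ∀ s ∈ Icc 1 l, ‖E s‖ ≤ C)
    (hO : ∀ s ∈ Icc 1 l, ‖O s‖ ≤ C) (ht : 0 ≤ t) : ‖selfSimilar l E O t‖ ≤ C * t := by
  rcases ht.eq_or_lt with rfl | ht
  · simp [selfSimilar_of_nonpos]
  have hC : 0 ≤ C := (norm_nonneg _).trans (hE 1 ⟨le_rfl, hl.le⟩)
  have hcell := mem_Ico_cell hl ht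
  have hpos : 0 < l ^ cell l t := zpow_pos (by linarith) _
  have hphase : ∀ s ∈ Icc 1 l, ‖phase (cell l t) E O s‖ ≤ C := phase_induction hE hO _
  rw [selfSimilar_of_mem_Ico hl hcell, norm_smul, Real.norm_of_nonneg hpos.le, mul_comm C]
  exact mul_le_mul hcell.1 (hphase _ (div_zpow_mem_Icc hl (Ico_subset_Icc_self hcell)))
    (norm_nonneg _) ht.le

theorem continuousOn_selfSimilar (hl : 1 < l) (h : PhasesMatch l E O)
    (hE : ContinuousOn E (Icc 1 l)) (hO : ContinuousOn O (Icc 1 l)) :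
    ContinuousOn (selfSimilar l E O) (Ici 0) := by
  intro t ht
  rcases (mem_Ici.1 ht).eq_or_lt with rfl | ht
  · obtain ⟨CE, hCE⟩ := isCompact_Icc.exists_bound_of_continuousOn hE
    obtain ⟨CO, hCO⟩ := isCompact_Icc.exists_bound_of_continuousOn hO
    have hlin : Tendsto (fun t => max CE CO * t) (𝓝[Ici 0] 0) (𝓝 0) := by
      simpa using ((continuous_const_mul (max CE CO)).tendsto 0).mono_left nhdsWithin_le_nhds
    rw [ContinuousWithinAt, selfSimilar_of_nonpos le_rfl]
    refine squeeze_zero_norm' ?_ hlin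
    filter_upwards [self_mem_nhdsWithin] with s hs
    exact norm_selfSimilar_le hl (fun s hs => (hCE s hs).trans (le_max_left _ _))
      (fun s hs => (hCO s hs).trans (le_max_right _ _)) hs
  · set n := cell l t
    have hcell := mem_Ico_cell hl ht
    have hlow : l ^ (n - 1) < l ^ n := zpow_lt_zpow_right₀ hl (sub_one_lt n)
    have hunion := (continuousOn_selfSimilar_Icc hl h hE hO (n - 1)).union_of_isClosed
      (continuousOn_selfSimilar_Icc hl h hE hO n) isClosed_Icc isClosed_Icc
    rw [sub_add_cancel, Icc_union_Icc_eq_Icc hlow.le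
      (zpow_le_zpow_right₀ hl.le (le_add_of_nonneg_right zero_le_one))] at hunion
    exact (hunion.continuousAt (Icc_mem_nhds (hlow.trans_le hcell.1) hcell.2)).continuousWithinAt

end Normed

section Real

variable {E O : ℝ → ℝ}

theorem selfSimilar_nonneg (hl : 1 < l) (hE : ∀ s ∈ Icc 1 l, 0 ≤ E s)
    (hO : ∀ s ∈ Icc 1 l, 0 ≤ O s) (t : ℝ) : 0 ≤ selfSimilar l E O t := by
  rcases le_or_gt t 0 with ht | ht
  · rw [selfSimilar_of_nonpos ht]
  have hcell := mem_Ico_cell hl ht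
  have hphase : ∀ s ∈ Icc 1 l, 0 ≤ phase (cell l t) E O s := phase_induction hE hO _
  rw [selfSimilar_of_mem_Ico hl hcell, smul_eq_mul]
  exact mul_nonneg (zpow_pos (by linarith) _).le
    (hphase _ (div_zpow_mem_Icc hl (Ico_subset_Icc_self hcell)))

theorem monotoneOn_selfSimilar_Icc (hl : 1 < l) (h : PhasesMatch l E O)
    (hE : MonotoneOn E (Icc 1 l)) (hO : MonotoneOn O (Icc 1 l)) (n : ℤ) :
    MonotoneOn (selfSimilar l E O) (Icc (l ^ n) (l ^ (n + 1))) := by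
  intro s hs t ht hst
  have hpos : 0 < l ^ n := zpow_pos (by linarith) n
  have hphase : MonotoneOn (phase n E O) (Icc 1 l) := phase_induction hE hO n
  rw [selfSimilar_of_mem_Icc hl h hs, selfSimilar_of_mem_Icc hl h ht, smul_eq_mul, smul_eq_mul]
  exact mul_le_mul_of_nonneg_left (hphase (div_zpow_mem_Icc hl hs) (div_zpow_mem_Icc hl ht)
    (div_le_div_of_nonneg_right hst hpos.le)) hpos.le

theorem monotoneOn_selfSimilar_Icc_zpow (hl : 1 < l) (h : PhasesMatch l E O)
    (hE : MonotoneOn E (Icc 1 l)) (hO : MonotoneOn O (Icc 1 l)) {m n : ℤ} (hmn : m ≤ n) :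
    MonotoneOn (selfSimilar l E O) (Icc (l ^ m) (l ^ n)) := by
  induction n, hmn using Int.leInduction with
  | base => rw [Icc_self]; exact monotoneOn_singleton _
  | succ n hmn ih =>
    have hmn' : l ^ m ≤ l ^ n := zpow_le_zpow_right₀ hl.le hmn
    have hn : l ^ n ≤ l ^ (n + 1) := zpow_le_zpow_right₀ hl.le (by omega)
    rw [← Icc_union_Icc_eq_Icc hmn' hn]
    exact ih.union_right (monotoneOn_selfSimilar_Icc hl h hE hO n) (isGreatest_Icc hmn')
      (isLeast_Icc hn)

theorem monotoneOn_selfSimilar (hl : 1 < l) (h : PhasesMatch l E O)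
    (hE : MonotoneOn E (Icc 1 l)) (hO : MonotoneOn O (Icc 1 l))
    (hE₀ : ∀ s ∈ Icc 1 l, 0 ≤ E s) (hO₀ : ∀ s ∈ Icc 1 l, 0 ≤ O s) :
    MonotoneOn (selfSimilar l E O) (Ici 0) := by
  intro s hs t ht hst
  rcases (mem_Ici.1 hs).eq_or_lt with rfl | hs
  · rw [selfSimilar_of_nonpos le_rfl]
    exact selfSimilar_nonneg hl hE₀ hO₀ t
  have hscell := mem_Ico_cell hl hs
  have htcell := mem_Ico_cell hl (hs.trans_le hst)
  have hcell : cell l s ≤ cell l t + 1 :=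
    ((zpow_lt_zpow_iff_right₀ hl).1 (hscell.1.trans_lt (hst.trans_lt htcell.2))).le
  exact monotoneOn_selfSimilar_Icc_zpow hl h hE hO hcell ⟨hscell.1, hst.trans htcell.2.le⟩
    ⟨hscell.1.trans hst, htcell.2.le⟩ hst

def IsComplementaryOn (g m : ℝ → ℝ) (S : Set ℝ) : Prop :=
  ∀ s ∈ S, ∀ t ∈ S, s ≤ t → (∀ r ∈ Icc s t, 0 < g r) → m s = m t

theorem isComplementaryOn_const (g : ℝ → ℝ) (c : ℝ) (S : Set ℝ) :
    IsComplementaryOn g (fun _ => c) S :=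
  fun _ _ _ _ _ _ => rfl

theorem isComplementaryOn_zero (m : ℝ → ℝ) (S : Set ℝ) :
    IsComplementaryOn (fun _ => 0) m S :=
  fun s _ _ _ hst hpos => absurd (hpos s ⟨le_rfl, hst⟩) (lt_irrefl 0)

theorem IsComplementaryOn.phase {gE gO mE mO : ℝ → ℝ} {S : Set ℝ}
    (hE : IsComplementaryOn gE mE S) (hO : IsComplementaryOn gO mO S) (n : ℤ) :
    IsComplementaryOn (phase n gE gO) (phase n mE mO) S := by
  unfold SkorokhodCounterexample.phase; split_ifs <;> assumption

variable {gE gO mE mO : ℝ → ℝ}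

theorem isComplementaryOn_selfSimilar_Icc (hl : 1 < l) (hg : PhasesMatch l gE gO)
    (hm : PhasesMatch l mE mO) (hE : IsComplementaryOn gE mE (Icc 1 l))
    (hO : IsComplementaryOn gO mO (Icc 1 l)) (n : ℤ) :
    IsComplementaryOn (selfSimilar l gE gO) (selfSimilar l mE mO)
      (Icc (l ^ n) (l ^ (n + 1))) := by
  intro s hs t ht hst hpos
  have hl0 : 0 < l ^ n := zpow_pos (by linarith) n
  rw [selfSimilar_of_mem_Icc hl hm hs, selfSimilar_of_mem_Icc hl hm ht]
  refine congrArg _ (hE.phase hO n _ (div_zpow_mem_Icc hl hs) _ (div_zpow_mem_Icc hl ht)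
    (div_le_div_of_nonneg_right hst hl0.le) fun r hr => ?_)
  have hr' : l ^ n * r ∈ Icc s t := by
    constructor
    · rw [← div_le_iff₀' hl0]; exact hr.1
    · rw [← le_div_iff₀' hl0]; exact hr.2
  have := hpos _ hr'
  rw [selfSimilar_of_mem_Icc hl hg ⟨hs.1.trans hr'.1, hr'.2.trans ht.2⟩, smul_eq_mul,
    mul_div_cancel_left₀ _ hl0.ne'] at this
  exact pos_of_mul_pos_right this hl0.le

theorem selfSimilar_zpow_of_odd (hl : 1 < l) (h : gO 1 = 0) (hn : Odd n) :
    selfSimilar l gE gO (l ^ n) = 0 := by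
  rw [selfSimilar_of_mem_Ico hl ⟨le_rfl, zpow_lt_zpow_right₀ hl (lt_add_one n)⟩,
    div_self (zpow_pos (by linarith) n).ne', phase, if_neg (Int.not_even_iff_odd.2 hn), h,
    smul_zero]

theorem isComplementaryOn_selfSimilar (hl : 1 < l) (hg : PhasesMatch l gE gO)
    (hm : PhasesMatch l mE mO) (hzero : gO 1 = 0) (hE : IsComplementaryOn gE mE (Icc 1 l))
    (hO : IsComplementaryOn gO mO (Icc 1 l)) :
    IsComplementaryOn (selfSimilar l gE gO) (selfSimilar l mE mO) (Ici 0) := by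
  intro s hs t ht hst hpos
  have hs0 : 0 < s := by
    refine (mem_Ici.1 hs).lt_of_ne fun h => ?_
    have := hpos s ⟨le_rfl, hst⟩
    rw [← h, selfSimilar_of_nonpos le_rfl] at this
    exact lt_irrefl 0 this
  have hcell := isComplementaryOn_selfSimilar_Icc hl hg hm hE hO
  set n := cell l s
  obtain ⟨hsn, hsn'⟩ := mem_Ico_cell hl hs0
  have hmono : l ^ (n + 1) ≤ l ^ (n + 1 + 1) :=
    zpow_le_zpow_right₀ hl.le (le_add_of_nonneg_right zero_le_one)
  rcases le_or_gt t (l ^ (n + 1)) with htn | htn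
  · exact hcell n s ⟨hsn, hsn'.le⟩ t ⟨hsn.trans hst, htn⟩ hst hpos
  -- Of two consecutive cell boundaries one has an odd exponent, where `selfSimilar l gE gO` is 0.
  have htn' : t ≤ l ^ (n + 1 + 1) := by
    by_contra! h
    obtain ⟨k, hk, hodd⟩ : ∃ k ∈ ({n + 1, n + 1 + 1} : Set ℤ), Odd k := by
      rcases Int.even_or_odd (n + 1) with he | ho
      · exact ⟨n + 1 + 1, by simp, he.add_one⟩
      · exact ⟨n + 1, by simp, ho⟩
    have hkt : l ^ k ∈ Icc s t := by
      rcases hk with rfl | rfl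
      · exact ⟨hsn'.le, htn.le⟩
      · exact ⟨hsn'.le.trans hmono, h.le⟩
    have := hpos _ hkt
    rw [selfSimilar_zpow_of_odd hl hzero hodd] at this
    exact lt_irrefl 0 this
  calc selfSimilar l mE mO s = selfSimilar l mE mO (l ^ (n + 1)) :=
        hcell n s ⟨hsn, hsn'.le⟩ _ ⟨hsn.trans hsn'.le, le_rfl⟩ hsn'.le
          fun r hr => hpos r ⟨hr.1, hr.2.trans htn.le⟩
    _ = selfSimilar l mE mO t :=
        hcell (n + 1) _ ⟨le_rfl, hmono⟩ t ⟨htn.le, htn'⟩ htn.le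
          fun r hr => hpos r ⟨hsn'.le.trans hr.1, hr.2⟩

end Real

section Construction

def tilt (l s : ℝ) : ℝ := (l + 1 - 2 * s) / (l - 1)

/-- The solution of `l ^ 2 * ν = ν + 1` (`sq_mul_nu`), which makes the phases of `m` match. -/
def nu (l : ℝ) : ℝ := 1 / (l ^ 2 - 1)

/- In the even phase `g` runs along the face `g₂ = 0` into the corner and stays there while `m₂`
pushes; in the odd phase `m₁` pushes it up the face `g₁ = 0` to `(0, 1)`, from where it moves
freely to `(l, 0)`. -/

def fBase (l s : ℝ) : Fin 2 → ℝ :=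
  ![(tilt l s)⁺ + l * (tilt l s)⁻, -(l + 1) * nu l - (tilt l s)⁻]

def gEven (l s : ℝ) : Fin 2 → ℝ := ![(tilt l s)⁺, 0]

def gOdd (l s : ℝ) : Fin 2 → ℝ := ![l * (tilt l s)⁻, 1 - |tilt l s|]

def mEven (l s : ℝ) : Fin 2 → ℝ := ![l * nu l, nu l + (tilt l s)⁻]

def mOdd (l s : ℝ) : Fin 2 → ℝ := ![nu l + 1 - (tilt l s)⁺, l * nu l]

theorem tilt_one (hl : 1 < l) : tilt l 1 = 1 := by
  rw [tilt, div_eq_one_iff_eq (by linarith)]; ring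

theorem tilt_self (hl : 1 < l) : tilt l l = -1 := by
  rw [tilt, div_eq_iff (by linarith)]; ring

theorem antitone_tilt (hl : 1 < l) : Antitone (tilt l) := fun s t hst =>
  div_le_div_of_nonneg_right (by linarith) (by linarith)

theorem abs_tilt_le_one (hl : 1 < l) {s : ℝ} (hs : s ∈ Icc 1 l) : |tilt l s| ≤ 1 := by
  have hl1 : 0 < l - 1 := by linarith
  rw [abs_le, tilt, le_div_iff₀ hl1, div_le_iff₀ hl1]
  constructor <;> linarith [hs.1, hs.2]

@[fun_prop]
theorem continuous_tilt : Continuous (tilt l) := by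
  unfold tilt; fun_prop

theorem nu_pos (hl : 1 < l) : 0 < nu l := by
  unfold nu; have : 1 < l ^ 2 := by nlinarith
  exact div_pos one_pos (by linarith)

theorem sq_mul_nu (hl : 1 < l) : l ^ 2 * nu l = nu l + 1 := by
  have : l ^ 2 - 1 ≠ 0 := by nlinarith
  unfold nu; field_simp; ring

theorem phasesMatch_fBase (hl : 1 < l) : PhasesMatch l (fBase l) (fBase l) := by
  have h : fBase l l = l • fBase l 1 := by
    have := sq_mul_nu hl
    ext j; fin_cases j
    · simp [fBase, tilt_one hl, tilt_self hl]
    · simp [fBase, tilt_one hl, tilt_self hl]; linear_combination this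
  exact ⟨h, h⟩

theorem phasesMatch_g (hl : 1 < l) : PhasesMatch l (gEven l) (gOdd l) := by
  constructor <;> ext j <;> fin_cases j <;> simp [gEven, gOdd, tilt_one hl, tilt_self hl]

theorem phasesMatch_m (hl : 1 < l) : PhasesMatch l (mEven l) (mOdd l) := by
  have := sq_mul_nu hl
  constructor <;> ext j <;> fin_cases j <;> simp [mEven, mOdd, tilt_one hl, tilt_self hl] <;>
    linear_combination -this

theorem gEven_eq (s : ℝ) : gEven l s = fBase l s + !![1, -l; 1, 1] *ᵥ mEven l s := by
  ext j; fin_cases j <;> simp [gEven, fBase, mEven] <;> ring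

theorem gOdd_eq (hl : 1 < l) (s : ℝ) :
    gOdd l s = fBase l s + !![1, -l; 1, 1] *ᵥ mOdd l s := by
  have := sq_mul_nu hl
  ext j; fin_cases j
  · simp [gOdd, fBase, mOdd]; linear_combination this
  · simp [gOdd, fBase, mOdd, ← posPart_add_negPart]; ring

theorem continuous_fBase : Continuous (fBase l) := by
  unfold fBase; fun_prop

theorem continuous_gEven : Continuous (gEven l) := by
  unfold gEven; fun_prop

theorem continuous_gOdd : Continuous (gOdd l) := by
  unfold gOdd; fun_prop

theorem continuous_mEven : Continuous (mEven l) := by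
  unfold mEven; fun_prop

theorem continuous_mOdd : Continuous (mOdd l) := by
  unfold mOdd; fun_prop

theorem gEven_nonneg (s : ℝ) (j : Fin 2) : 0 ≤ gEven l s j := by
  fin_cases j <;> simp [gEven, posPart_nonneg]

theorem gOdd_nonneg (hl : 1 < l) {s : ℝ} (hs : s ∈ Icc 1 l) (j : Fin 2) : 0 ≤ gOdd l s j := by
  fin_cases j
  · simpa [gOdd] using mul_nonneg (by linarith) (negPart_nonneg (tilt l s))
  · simpa [gOdd] using abs_tilt_le_one hl hs

theorem mEven_nonneg (hl : 1 < l) (s : ℝ) (j : Fin 2) : 0 ≤ mEven l s j := by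
  have := nu_pos hl
  fin_cases j
  · simpa [mEven] using mul_nonneg (by linarith) this.le
  · simpa [mEven] using add_nonneg this.le (negPart_nonneg (tilt l s))

theorem mOdd_nonneg (hl : 1 < l) {s : ℝ} (hs : s ∈ Icc 1 l) (j : Fin 2) : 0 ≤ mOdd l s j := by
  have := nu_pos hl
  have : (tilt l s)⁺ ≤ 1 := sup_le ((le_abs_self _).trans (abs_tilt_le_one hl hs)) zero_le_one
  fin_cases j
  · simp [mOdd]; linarith
  · simpa [mOdd] using mul_nonneg (by linarith) (nu_pos hl).le

theorem monotone_mEven (hl : 1 < l) (j : Fin 2) : Monotone (fun s => mEven l s j) := by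
  fin_cases j
  · simpa [mEven] using monotone_const
  · simpa [mEven] using (negPart_anti.comp (antitone_tilt hl)).const_add (nu l)

theorem monotone_mOdd (hl : 1 < l) (j : Fin 2) : Monotone (fun s => mOdd l s j) := by
  fin_cases j
  · intro s t hst
    have := posPart_mono (antitone_tilt hl hst)
    simp [mOdd]
    linarith
  · simpa [mOdd] using monotone_const

theorem gOdd_one (hl : 1 < l) : gOdd l 1 = 0 := by
  ext j; fin_cases j <;> simp [gOdd, tilt_one hl]

theorem isComplementaryOn_even (j : Fin 2) :
    IsComplementaryOn (fun s => gEven l s j) (fun s => mEven l s j) (Icc 1 l) := by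
  fin_cases j
  · exact isComplementaryOn_const _ _ _
  · exact isComplementaryOn_zero _ _

theorem isComplementaryOn_odd (hl : 1 < l) (j : Fin 2) :
    IsComplementaryOn (fun s => gOdd l s j) (fun s => mOdd l s j) (Icc 1 l) := by
  fin_cases j
  · intro s _ t _ hst hpos
    have hs : tilt l s < 0 := by
      by_contra! h
      simpa [gOdd, negPart_eq_zero.2 h] using hpos s ⟨le_rfl, hst⟩
    simp [mOdd, posPart_eq_zero.2 hs.le, posPart_eq_zero.2 ((antitone_tilt hl hst).trans hs.le)]
  · exact isComplementaryOn_const _ _ _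

theorem isSkorokhod_selfSimilar (hl : 1 < l) :
    IsSkorokhod !![1, -l; 1, 1] (selfSimilar l (fBase l) (fBase l))
      (selfSimilar l (gEven l) (gOdd l)) (selfSimilar l (mEven l) (mOdd l)) := by
  refine ⟨continuousOn_selfSimilar hl (phasesMatch_g hl) continuous_gEven.continuousOn
      continuous_gOdd.continuousOn,
    continuousOn_selfSimilar hl (phasesMatch_m hl) continuous_mEven.continuousOn
      continuous_mOdd.continuousOn,
    fun t _ j => ?_, selfSimilar_of_nonpos le_rfl, fun j => ?_,
    fun t _ => selfSimilar_add_map (mulVecLin !![1, -l; 1, 1]) gEven_eq (gOdd_eq hl) t,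
    fun j s t hs hst => ?_⟩
  · rw [selfSimilar_apply]
    exact selfSimilar_nonneg hl (fun s _ => gEven_nonneg s j) (fun s hs => gOdd_nonneg hl hs j) t
  · simp only [selfSimilar_apply]
    exact monotoneOn_selfSimilar hl ((phasesMatch_m hl).apply j)
      ((monotone_mEven hl j).monotoneOn _) ((monotone_mOdd hl j).monotoneOn _)
      (fun s _ => mEven_nonneg hl s j) (fun s hs => mOdd_nonneg hl hs j)
  · simp only [selfSimilar_apply]
    exact isComplementaryOn_selfSimilar hl ((phasesMatch_g hl).apply j)
      ((phasesMatch_m hl).apply j) (congrFun (gOdd_one hl) j) (isComplementaryOn_even j)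
      (isComplementaryOn_odd hl j) s hs t (le_trans hs hst) hst

theorem isSkorokhod_selfSimilar_swap (hl : 1 < l) :
    IsSkorokhod !![1, -l; 1, 1] (selfSimilar l (fBase l) (fBase l))
      (selfSimilar l (gOdd l) (gEven l)) (selfSimilar l (mOdd l) (mEven l)) := by
  have h := (isSkorokhod_selfSimilar hl).comp_mul (zero_lt_one.trans hl)
  simpa only [selfSimilar_mul_left hl, inv_smul_smul₀ (zero_lt_one.trans hl).ne'] using h

end Construction

end

end SkorokhodCounterexample

theorem counterexample_general (a : ℝ) (ha : a < -1) :
    ∃ f : ℝ → Fin 2 → ℝ, ContinuousOn f (Set.Ici 0) ∧ (∀ j, 0 ≤ f 0 j) ∧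
      ∃ g m gbar mbar : ℝ → Fin 2 → ℝ,
        IsSkorokhod (!![1, a; 1, 1]) f g m ∧
        IsSkorokhod (!![1, a; 1, 1]) f gbar mbar ∧
        ∃ t ∈ Set.Ici (0:ℝ), g t ≠ gbar t := by
  open SkorokhodCounterexample in
  obtain ⟨l, hl, rfl⟩ : ∃ l, 1 < l ∧ a = -l := ⟨-a, by linarith, by ring⟩
  refine ⟨_, continuousOn_selfSimilar hl (phasesMatch_fBase hl) continuous_fBase.continuousOn
    continuous_fBase.continuousOn, fun j => by simp [selfSimilar_of_nonpos], _, _, _, _,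
    isSkorokhod_selfSimilar hl, isSkorokhod_selfSimilar_swap hl, 1, mem_Ici.2 zero_le_one,
    fun h => ?_⟩
  simpa [selfSimilar_one hl, gEven, gOdd, tilt_one hl] using congrFun h 0
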